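/- Sequential cluster exploration in the Erdős–Rényi graph: let m ≥ 1, p ∈ [0,1], and let C(0) denote the cluster of vertex 0 in G(m,p). For every subset A of {0,…,m−1} with 0 ∈ A, A ≠ {0,…,m−1}, and P(C(0) = A) > 0, the conditional distribution, given {C(0) = A}, of the induced subgraph of G(m,p) on the complement of A is that of an Erdős–Rényi graph on m − |A| vertices with edge probability p. Consequently, conditionally on {C(0) = A} with |A| = l_1, the cluster of the smallest vertex not in A has cardinality l_2 with probability P_{l_2 − 1}^{m − l_1 − 1}(p), for every 1 ≤ l_2 ≤ m − l_1. -/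

import Mathlib

open Classical

noncomputable section

noncomputable def pr {ι : Type*} [Fintype ι] (q : ι → ℝ) (E : Set (ι → Bool)) : ℝ :=
  ∑ ω ∈ Finset.univ.filter (· ∈ E), ∏ i, (if ω i then q i else 1 - q i)

-- basic sum form
lemma pr_eq_sum {ι : Type*} [Fintype ι] (q : ι → ℝ) (E : Set (ι → Bool)) :
    pr q E = ∑ ω : ι → Bool, (if ω ∈ E then ∏ i, (if ω i then q i else 1 - q i) else 0) := by
  rw [pr, Finset.sum_filter]

lemma pr_comp_equiv {ι κ : Type*} [Fintype ι] [Fintype κ] (c : κ ≃ ι) (q : ι → ℝ)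
    (E : Set (κ → Bool)) :
    pr q {f | (fun j => f (c j)) ∈ E} = pr (fun j => q (c j)) E := by
  rw [pr_eq_sum, pr_eq_sum]
  apply Fintype.sum_equiv (Equiv.arrowCongr c (Equiv.refl Bool)).symm
  intro f
  have h1 : (fun j => f (c j)) = (Equiv.arrowCongr c (Equiv.refl Bool)).symm f := rfl
  rw [← h1]
  congr 1
  exact (Fintype.prod_equiv c _ _ (fun j => rfl)).symm

lemma pr_factor {ι : Type*} [Fintype ι] (q : ι → ℝ) (Q : ι → Prop)
    (E1 : Set (ι → Bool)) (E2 : Set ({i // Q i} → Bool))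
    (hE1 : ∀ ω ω' : ι → Bool, (∀ i, ¬ Q i → ω i = ω' i) → ω ∈ E1 → ω' ∈ E1) :
    pr q {ω | ω ∈ E1 ∧ (fun i : {i // Q i} => ω i.1) ∈ E2}
      = pr q E1 * pr (fun i : {i // Q i} => q i.1) E2 := by
  classical
  set w : ι → Bool → ℝ := fun i b => if b then q i else 1 - q i with hw
  -- reconstruct from the two halves
  set rec : ({i // Q i} → Bool) → ({i // ¬ Q i} → Bool) → (ι → Bool) :=
    fun f g i => if h : Q i then f ⟨i, h⟩ else g ⟨i, h⟩ with hrec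
  have hrecQ : ∀ f g (i : {i // Q i}), rec f g i.1 = f i := by
    intro f g i; simp [hrec, i.2]
  have hrecN : ∀ f g (i : {i // ¬ Q i}), rec f g i.1 = g i := by
    intro f g i; simp [hrec, i.2]
  have hmemE1 : ∀ f g, rec f g ∈ E1 ↔ (rec (fun _ => false) g) ∈ E1 := by
    intro f g
    constructor
    · exact hE1 _ _ (fun i hi => by simp [hrec, hi])
    · exact hE1 _ _ (fun i hi => by simp [hrec, hi])
  have key : ∀ (E : Set (ι → Bool)),
      pr q E = ∑ f : {i // Q i} → Bool, ∑ g : {i // ¬ Q i} → Bool,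
        (if rec f g ∈ E then 1 else 0) * ((∏ i : {i // Q i}, w i.1 (f i)) *
          (∏ i : {i // ¬ Q i}, w i.1 (g i))) := by
    intro E
    rw [pr_eq_sum]
    rw [← (Equiv.piEquivPiSubtypeProd Q (fun _ => Bool)).symm.sum_comp]
    rw [Fintype.sum_prod_type]
    apply Finset.sum_congr rfl; intro f _
    apply Finset.sum_congr rfl; intro g _
    have hsymm : (Equiv.piEquivPiSubtypeProd Q (fun _ => Bool)).symm (f, g) = rec f g := rfl
    rw [hsymm]
    rw [← Fintype.prod_subtype_mul_prod_subtype Q (fun i => w i (rec f g i))]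
    simp only [hrecQ, hrecN]
    split <;> simp
  have keyE1 : pr q E1 = ∑ g : {i // ¬ Q i} → Bool,
      (if rec (fun _ => false) g ∈ E1 then 1 else 0) * ∏ i : {i // ¬ Q i}, w i.1 (g i) := by
    rw [key E1]
    have hZ : ∑ f : {i // Q i} → Bool, ∏ i : {i // Q i}, w i.1 (f i) = 1 := by
      rw [← Fintype.piFinset_univ, ← Finset.prod_univ_sum]
      have : ∀ i : {i // Q i}, ∑ b : Bool, w i.1 b = 1 := by
        intro i; rw [Fintype.sum_bool]; simp [hw]
      rw [Finset.prod_congr rfl (fun i _ => this i)]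
      simp
    calc ∑ f : {i // Q i} → Bool, ∑ g : {i // ¬ Q i} → Bool,
        (if rec f g ∈ E1 then 1 else 0) * ((∏ i : {i // Q i}, w i.1 (f i)) *
          (∏ i : {i // ¬ Q i}, w i.1 (g i)))
        = ∑ f : {i // Q i} → Bool, (∏ i : {i // Q i}, w i.1 (f i)) *
            ∑ g : {i // ¬ Q i} → Bool,
              (if rec (fun _ => false) g ∈ E1 then 1 else 0) * ∏ i : {i // ¬ Q i}, w i.1 (g i) := by
          apply Finset.sum_congr rfl; intro f _
          rw [Finset.mul_sum]
          apply Finset.sum_congr rfl; intro g _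
          rw [(by rw [hmemE1] : (if rec f g ∈ E1 then (1:ℝ) else 0) =
            (if rec (fun _ => false) g ∈ E1 then 1 else 0))]
          ring
      _ = _ := by rw [← Finset.sum_mul, hZ, one_mul]
  have keyE2 : pr (fun i : {i // Q i} => q i.1) E2
      = ∑ f : {i // Q i} → Bool, (if f ∈ E2 then 1 else 0) * ∏ i : {i // Q i}, w i.1 (f i) := by
    rw [pr_eq_sum]
    refine Finset.sum_congr ?_ fun f _ => ?_
    · congr!
    · split <;> simp [hw]
  rw [key, keyE1, keyE2, Finset.sum_mul, Finset.sum_comm]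
  refine Finset.sum_congr rfl fun g _ => ?_
  rw [Finset.mul_sum]
  refine Finset.sum_congr rfl fun f _ => ?_
  have hres : (fun i : {i // Q i} => rec f g i.1) = f := funext (hrecQ f g)
  have : (rec f g ∈ {ω | ω ∈ E1 ∧ (fun i : {i // Q i} => ω i.1) ∈ E2})
      ↔ ((rec (fun _ => false) g ∈ E1) ∧ f ∈ E2) := by
    rw [Set.mem_setOf_eq, hres, hmemE1]
  simp only [this]
  by_cases h1 : rec (fun _ => false) g ∈ E1 <;> by_cases h2 : f ∈ E2 <;> simp [h1, h2] <;> ring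

def genGraph {V : Type*} (ω : Sym2 V → Bool) : SimpleGraph V where
  Adj u v := u ≠ v ∧ ω s(u, v) = true
  symm := ⟨fun u v h => ⟨h.1.symm, by rw [Sym2.eq_swap]; exact h.2⟩⟩
  loopless := ⟨fun u h => h.1 rfl⟩

noncomputable def cluster {V : Type*} [Fintype V] (G : SimpleGraph V) (v : V) : Finset V :=
  Finset.univ.filter fun w => G.Reachable v w

lemma mem_cluster {V : Type*} [Fintype V] {G : SimpleGraph V} {v w : V} :
    w ∈ cluster G v ↔ G.Reachable v w := by simp [cluster]

lemma walk_stays {V : Type*} {G : SimpleGraph V} {S : Set V}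
    (hS : ∀ a ∈ S, ∀ b, G.Adj a b → b ∈ S) {v w : V} (pw : G.Walk v w) (hv : v ∈ S) : w ∈ S := by
  induction pw with
  | nil => exact hv
  | cons h _ ih => exact ih (hS _ hv _ h)

lemma cluster_closed {V : Type*} [Fintype V] {G : SimpleGraph V} {z : V} {A : Finset V}
    (h : cluster G z = A) : ∀ a ∈ A, ∀ b, G.Adj a b → b ∈ A := by
  intro a ha b hab
  rw [← h, mem_cluster] at ha ⊢
  exact ha.trans hab.reachable

lemma agree_cluster {V : Type*} [Fintype V] {ω ω' : Sym2 V → Bool} {z : V} {A : Finset V}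
    (hagree : ∀ e : Sym2 V, (∃ v ∈ e, v ∈ A) → ω e = ω' e)
    (h : cluster (genGraph ω) z = A) : cluster (genGraph ω') z = A := by
  have hz : z ∈ A := by rw [← h, mem_cluster]
  have hcl := cluster_closed h
  have hadj : ∀ a ∈ A, ∀ b, ((genGraph ω).Adj a b ↔ (genGraph ω').Adj a b) := by
    intro a ha b
    have he : ω s(a,b) = ω' s(a,b) := hagree _ ⟨a, by simp, ha⟩
    constructor
    · exact fun hb => ⟨hb.1, by rw [← he]; exact hb.2⟩
    · exact fun hb => ⟨hb.1, by rw [he]; exact hb.2⟩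
  have hcl' : ∀ a ∈ (↑A : Set V), ∀ b, (genGraph ω').Adj a b → b ∈ (↑A : Set V) :=
    fun a ha b hb => hcl a ha b ((hadj a ha b).mpr hb)
  have htrans : ∀ {v w : V}, (genGraph ω).Walk v w → v ∈ A → (genGraph ω').Reachable v w := by
    intro v w pw
    induction pw with
    | nil => exact fun _ => SimpleGraph.Reachable.refl _
    | cons h0 _ ih =>
      intro hv
      have hu := hcl _ hv _ h0
      exact (((hadj _ hv _).mp h0).reachable).trans (ih hu)
  ext w
  rw [mem_cluster]
  constructor
  · intro hr
    exact hr.elim fun pw => walk_stays hcl' pw hz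
  · intro hw
    have : (genGraph ω).Reachable z w := by rw [← mem_cluster, h]; exact hw
    exact this.elim fun pw => htrans pw hz

lemma comap_genGraph {m k : ℕ} {emb : Fin k → Fin m} (hinj : Function.Injective emb)
    (ω : Sym2 (Fin m) → Bool) :
    (genGraph ω).comap emb = genGraph (fun e' => ω (Sym2.map emb e')) := by
  ext u v
  show emb u ≠ emb v ∧ ω s(emb u, emb v) = true ↔ u ≠ v ∧ ω (Sym2.map emb s(u,v)) = true
  rw [Sym2.map_pair_eq]
  exact and_congr_left' hinj.ne_iff

lemma main_factor {m k : ℕ} {A : Finset (Fin m)} {emb : Fin k → Fin m}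
    (hinj : Function.Injective emb) (hmem : ∀ i, emb i ∉ A)
    (hsurj : ∀ v : Fin m, v ∉ A → ∃ i, emb i = v)
    (z : Fin m) (p : ℝ) (E₂ : Set (Sym2 (Fin k) → Bool)) :
    pr (fun _ : Sym2 (Fin m) => p)
        {ω | cluster (genGraph ω) z = A ∧ (fun e' => ω (Sym2.map emb e')) ∈ E₂}
      = pr (fun _ : Sym2 (Fin m) => p) {ω | cluster (genGraph ω) z = A} *
          pr (fun _ : Sym2 (Fin k) => p) E₂ := by
  classical
  set Q : Sym2 (Fin m) → Prop := fun e => ∀ v ∈ e, v ∉ A with hQ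
  -- the equivalence between Sym2 (Fin k) and the edges inside the complement
  have hQmap : ∀ e' : Sym2 (Fin k), Q (Sym2.map emb e') := by
    intro e'
    induction e' using Sym2.ind with
    | _ x y =>
      intro v hv
      rw [Sym2.map_pair_eq] at hv
      rcases Sym2.mem_iff.mp hv with h | h
      · exact h ▸ hmem x
      · exact h ▸ hmem y
  have hbij : Function.Bijective (fun e' : Sym2 (Fin k) => (⟨Sym2.map emb e', hQmap e'⟩ : {e // Q e})) := by
    constructor
    · intro e1 e2 h
      exact Sym2.map.injective hinj (congrArg Subtype.val h)
    · rintro ⟨e, he⟩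
      induction e using Sym2.ind with
      | _ x y =>
        obtain ⟨i, hi⟩ := hsurj x (he x (by simp))
        obtain ⟨j, hj⟩ := hsurj y (he y (by simp))
        exact ⟨s(i,j), Subtype.ext (by show Sym2.map emb s(i,j) = s(x,y); rw [Sym2.map_pair_eq, hi, hj])⟩
  set c : Sym2 (Fin k) ≃ {e // Q e} := Equiv.ofBijective _ hbij with hc
  have hE1dep : ∀ ω ω' : Sym2 (Fin m) → Bool, (∀ e, ¬ Q e → ω e = ω' e) →
      ω ∈ {ω | cluster (genGraph ω) z = A} → ω' ∈ {ω | cluster (genGraph ω) z = A} := by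
    intro ω ω' hag h
    refine agree_cluster (fun e he => hag e ?_) h
    obtain ⟨v, hv, hvA⟩ := he
    exact fun hQe => hQe v hv hvA
  have h1 := pr_factor (fun _ : Sym2 (Fin m) => p) Q {ω | cluster (genGraph ω) z = A}
      {f : {e // Q e} → Bool | (fun e' => f (c e')) ∈ E₂} hE1dep
  have h2 := @pr_comp_equiv _ _ (@Subtype.fintype _ Q (fun a => propDecidable (Q a)) _) _ c (fun _ : {e // Q e} => p) E₂
  have hset : {ω : Sym2 (Fin m) → Bool | ω ∈ {ω | cluster (genGraph ω) z = A} ∧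
        (fun i : {e // Q e} => ω i.1) ∈ {f : {e // Q e} → Bool | (fun e' => f (c e')) ∈ E₂}}
      = {ω | cluster (genGraph ω) z = A ∧ (fun e' => ω (Sym2.map emb e')) ∈ E₂} := by
    ext ω
    simp only [Set.mem_setOf_eq]
    exact Iff.rfl
  rw [← hset, h1]
  congr 1

lemma cluster_card_comap {m k : ℕ} {A : Finset (Fin m)} {emb : Fin k → Fin m}
    (hinj : Function.Injective emb) (hmem : ∀ i, emb i ∉ A)
    (hsurj : ∀ v : Fin m, v ∉ A → ∃ i, emb i = v)
    {ω : Sym2 (Fin m) → Bool} {z : Fin m} (hcl : cluster (genGraph ω) z = A) (v0 : Fin k) :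
    (cluster (genGraph ω) (emb v0)).card = (cluster ((genGraph ω).comap emb) v0).card := by
  classical
  have hclosedC : ∀ b : Fin m, b ∉ A → ∀ a, (genGraph ω).Adj b a → a ∉ A := by
    intro b hb a hab ha
    exact hb (cluster_closed hcl a ha b hab.symm)
  have comap_reach : ∀ {v w : Fin m}, (genGraph ω).Walk v w → ∀ v₀ : Fin k, emb v₀ = v →
      ∃ w₀ : Fin k, emb w₀ = w ∧ ((genGraph ω).comap emb).Reachable v₀ w₀ := by
    intro v w pw
    induction pw with
    | nil => exact fun v₀ hv₀ => ⟨v₀, hv₀, SimpleGraph.Reachable.refl _⟩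
    | @cons v u w h0 _ ih =>
      intro v₀ hv₀
      have hu : u ∉ A := hclosedC v (hv₀ ▸ hmem v₀) u (hv₀ ▸ h0 : (genGraph ω).Adj v u)
      obtain ⟨u₀, hu₀⟩ := hsurj u hu
      obtain ⟨w₀, hw₀, hr⟩ := ih u₀ hu₀
      refine ⟨w₀, hw₀, SimpleGraph.Reachable.trans ?_ hr⟩
      have : ((genGraph ω).comap emb).Adj v₀ u₀ := by
        show (genGraph ω).Adj (emb v₀) (emb u₀)
        rw [hv₀, hu₀]
        exact h0
      exact this.reachable
  have himg : Finset.image emb (cluster ((genGraph ω).comap emb) v0)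
      = cluster (genGraph ω) (emb v0) := by
    ext wv
    simp only [Finset.mem_image, mem_cluster]
    constructor
    · rintro ⟨w0, hw0, rfl⟩
      exact hw0.elim fun pw => ⟨pw.map ⟨emb, fun hadj => hadj⟩⟩
    · intro hr
      obtain ⟨pw⟩ := hr
      obtain ⟨w₀, hw₀, hr'⟩ := comap_reach pw v0 rfl
      exact ⟨w₀, hr', hw₀⟩
  rw [← himg, Finset.card_image_of_injective _ hinj]

noncomputable def PkL (L k : ℕ) (p : ℝ) : ℝ :=
  pr (fun _ : Sym2 (Fin (L + 1)) => p) {ω | (cluster (genGraph ω) 0).card = k + 1}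

lemma PkL_eq_pr (L : ℕ) (c : ℕ) (p : ℝ) {n : ℕ} (hn : n = L + 1) (hnpos : 0 < n) :
    PkL L c p = pr (fun _ : Sym2 (Fin n) => p)
      {ω | (cluster (genGraph ω) ⟨0, hnpos⟩).card = c + 1} := by
  subst hn
  have h0 : (⟨0, hnpos⟩ : Fin (L+1)) = 0 := by ext; simp
  rw [PkL, h0]

/-- **Sequential cluster exploration in the Erdős–Rényi graph.** Let `A` be a possible value
of the cluster `C(0)` of vertex `0` in `G(m, p)`, with `A ≠ {0, …, m−1}` and
`P(C(0) = A) > 0`. Then: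
(1) conditionally on `{C(0) = A}`, the induced subgraph on the complement of `A`
(transported to `Fin (m − |A|)` along the order isomorphism with `Aᶜ`) is distributed as an
Erdős–Rényi graph on `m − |A|` vertices with edge probability `p` (stated in the equivalent
product form `P(C(0) = A and induced graph = H) = P(C(0) = A) · P(G(m−|A|, p) = H)`);
(2) consequently, conditionally on `{C(0) = A}` with `|A| = l₁`, the cluster of the smallest
vertex not in `A` has cardinality `l₂` with probability `P_{l₂−1}^{m−l₁−1}(p)`, for every
`1 ≤ l₂ ≤ m − l₁`. -/
theorem sequential_cluster_exploration (m : ℕ) (hm : 1 ≤ m) (p : ℝ)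
    (hp0 : 0 ≤ p) (hp1 : p ≤ 1)
    (A : Finset (Fin m)) (h0 : (⟨0, hm⟩ : Fin m) ∈ A) (hA : A ≠ Finset.univ)
    (hpos : 0 < pr (fun _ : Sym2 (Fin m) => p) {ω | cluster (genGraph ω) ⟨0, hm⟩ = A}) :
    (∀ H : SimpleGraph (Fin (m - A.card)),
      pr (fun _ : Sym2 (Fin m) => p)
          {ω | cluster (genGraph ω) ⟨0, hm⟩ = A ∧
            (genGraph ω).comap
              (fun i => ((Aᶜ.orderIsoOfFin (by simp [Finset.card_compl])) i : Fin m)) = H} =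
        pr (fun _ : Sym2 (Fin m) => p) {ω | cluster (genGraph ω) ⟨0, hm⟩ = A} *
          pr (fun _ : Sym2 (Fin (m - A.card)) => p) {ω' | genGraph ω' = H}) ∧
    (∀ l2 : ℕ, 1 ≤ l2 → l2 ≤ m - A.card →
      pr (fun _ : Sym2 (Fin m) => p)
          {ω | cluster (genGraph ω) ⟨0, hm⟩ = A ∧
            (cluster (genGraph ω) (Aᶜ.min' ((Finset.compl_ne_univ_iff_nonempty Aᶜ).mp (by simpa using hA)))).card = l2} =
        pr (fun _ : Sym2 (Fin m) => p) {ω | cluster (genGraph ω) ⟨0, hm⟩ = A} *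
          PkL (m - A.card - 1) (l2 - 1) p) := by
  classical
  have hne : Aᶜ.Nonempty := (Finset.compl_ne_univ_iff_nonempty Aᶜ).mp (by simpa using hA)
  have hcardlt : A.card < m := by
    have := Finset.card_lt_card (Finset.ssubset_univ_iff.mpr hA)
    simpa using this
  have hkpos : 0 < m - A.card := Nat.sub_pos_of_lt hcardlt
  have hcard : Aᶜ.card = m - A.card := by simp [Finset.card_compl]
  set emb : Fin (m - A.card) → Fin m := fun i => ((Aᶜ.orderIsoOfFin hcard) i : Fin m) with hemb
  have hinj : Function.Injective emb := fun i j hij =>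
    (Aᶜ.orderIsoOfFin hcard).injective (Subtype.ext hij)
  have hmemc : ∀ i, emb i ∈ Aᶜ := fun i => (Aᶜ.orderIsoOfFin hcard i).2
  have hmem : ∀ i, emb i ∉ A := fun i => Finset.mem_compl.mp (hmemc i)
  have hsurj : ∀ v : Fin m, v ∉ A → ∃ i, emb i = v := fun v hv =>
    ⟨(Aᶜ.orderIsoOfFin hcard).symm ⟨v, Finset.mem_compl.mpr hv⟩, by
      show ((Aᶜ.orderIsoOfFin hcard) ((Aᶜ.orderIsoOfFin hcard).symm ⟨v, Finset.mem_compl.mpr hv⟩) : Fin m) = v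
      rw [OrderIso.apply_symm_apply]⟩
  constructor
  · intro H
    have hfac := main_factor (A := A) hinj hmem hsurj ⟨0, hm⟩ p
      {ω' : Sym2 (Fin (m - A.card)) → Bool | genGraph ω' = H}
    have hset : {ω : Sym2 (Fin m) → Bool | cluster (genGraph ω) ⟨0, hm⟩ = A ∧
          (genGraph ω).comap
            (fun i => ((Aᶜ.orderIsoOfFin (by simp [Finset.card_compl])) i : Fin m)) = H}
        = {ω | cluster (genGraph ω) ⟨0, hm⟩ = A ∧
            (fun e' => ω (Sym2.map emb e')) ∈ {ω' | genGraph ω' = H}} := by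
      ext ω
      simp only [Set.mem_setOf_eq]
      rw [show ((genGraph ω).comap
            (fun i => ((Aᶜ.orderIsoOfFin (by simp [Finset.card_compl])) i : Fin m)))
          = genGraph (fun e' => ω (Sym2.map emb e')) from comap_genGraph hinj ω]
    rw [hset]
    exact hfac
  · intro l2 hl2a hl2b
    have hemb0 : emb ⟨0, hkpos⟩
        = Aᶜ.min' ((Finset.compl_ne_univ_iff_nonempty Aᶜ).mp (by simpa using hA)) := by
      show ((Aᶜ.orderIsoOfFin hcard) ⟨0, hkpos⟩ : Fin m) = _
      rw [Finset.coe_orderIsoOfFin_apply, Finset.orderEmbOfFin_zero hcard hkpos]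
    have hPkL := PkL_eq_pr (m - A.card - 1) (l2 - 1) p
      (n := m - A.card) (Nat.succ_pred_eq_of_pos hkpos).symm hkpos
    have hl2' : l2 - 1 + 1 = l2 := Nat.succ_pred_eq_of_pos hl2a
    rw [hl2'] at hPkL
    have hfac := main_factor (A := A) hinj hmem hsurj ⟨0, hm⟩ p
      {ω' : Sym2 (Fin (m - A.card)) → Bool | (cluster (genGraph ω') ⟨0, hkpos⟩).card = l2}
    have hset : {ω : Sym2 (Fin m) → Bool | cluster (genGraph ω) ⟨0, hm⟩ = A ∧
          (cluster (genGraph ω)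
            (Aᶜ.min' ((Finset.compl_ne_univ_iff_nonempty Aᶜ).mp (by simpa using hA)))).card = l2}
        = {ω | cluster (genGraph ω) ⟨0, hm⟩ = A ∧
            (fun e' => ω (Sym2.map emb e')) ∈
              {ω' : Sym2 (Fin (m - A.card)) → Bool |
                (cluster (genGraph ω') ⟨0, hkpos⟩).card = l2}} := by
      ext ω
      simp only [Set.mem_setOf_eq]
      constructor
      · rintro ⟨hcl, hc⟩
        refine ⟨hcl, ?_⟩
        show (cluster (genGraph (fun e' => ω (Sym2.map emb e'))) ⟨0, hkpos⟩).card = l2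
        rw [← comap_genGraph hinj ω, ← cluster_card_comap hinj hmem hsurj hcl ⟨0, hkpos⟩, hemb0]
        exact hc
      · rintro ⟨hcl, hc⟩
        refine ⟨hcl, ?_⟩
        rw [← hemb0, cluster_card_comap hinj hmem hsurj hcl ⟨0, hkpos⟩, comap_genGraph hinj ω]
        exact hc
    rw [hset, hfac, hPkL]
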